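/- Let U ⊆ ℂ^m be open and let z : U → ℂ be real-differentiable with Ψ̃(q, z(q)) = 0 and ∂Ψ̃/∂ζ(q, z(q)) ≠ 0 for all q ∈ U. Then z is invariant under radial projection, i.e. (fderiv ℝ z q)(q) = 0 for every q ∈ U, if and only if Σ_{i=1}^m w^i · (∂Ψ/∂w^i) vanishes at (w(q, z(q)), z(q)) for every q ∈ U. In particular, if Ψ satisfies Condition (H) — Σ_{i=1}^m w_i · (∂Ψ/∂w^i)(w, ζ) = 0 for every (w, ζ) ∈ ℂ^m × ℂ with Ψ(w, ζ) = 0 — then every such solution z satisfies (fderiv ℝ z q)(q) = 0 throughout U, i.e. Σ_{j=1}^{2m} x^j · ∂z/∂x^j = 0, so z is constant along rays through the origin. -/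

import Mathlib

/-! Real scalings commute with `q ↦ w(q, ζ) = q - M(ζ) q̄`, so along the ray `t ↦ (1 + t) q` the
equation `Ψ̃(q, z(q)) = 0` reads `H(t, z((1 + t) q)) = 0`, where `H(s, ζ) := Ψ((1 + s) w(q, ζ), ζ)`
is holomorphic in both variables. Differentiating at `t = 0` gives
`∂ₛH + (dz_q q) ∂_ζH = 0` with `∂ₛH = Σ wⁱ ∂Ψ/∂wⁱ` (Euler) and `∂_ζH = ∂Ψ̃/∂ζ ≠ 0`. -/

open Matrix Filter Topology

lemma ofReal_smul_sub_mulVec_star {n : Type*} [Fintype n] (c : ℝ) (A : Matrix n n ℂ)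
    (q : n → ℂ) : (c : ℂ) • (q - A *ᵥ star q) = c • q - A *ᵥ star (c • q) := by
  rw [star_smul, star_trivial c, mulVec_smul, ← Complex.coe_smul, ← Complex.coe_smul, smul_sub]

lemma HasFDerivAt.apply_eq_zero_of_eventually_comp_eq_zero {E F : Type*}
    [NormedAddCommGroup E] [NormedSpace ℝ E] [NormedAddCommGroup F] [NormedSpace ℝ F]
    {H : E → F} {L : E →L[ℝ] F} {γ : ℝ → E} {v : E} {t₀ : ℝ}
    (hH : HasFDerivAt H L (γ t₀)) (hγ : HasDerivAt γ v t₀)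
    (h0 : ∀ᶠ t in 𝓝 t₀, H (γ t) = 0) : L v = 0 :=
  (hH.comp_hasDerivAt t₀ hγ).unique ((hasDerivAt_const t₀ 0).congr_of_eventuallyEq h0)

section Calculus

variable {𝕜 E F G : Type*} [NontriviallyNormedField 𝕜] [NormedAddCommGroup E] [NormedSpace 𝕜 E]
  [NormedAddCommGroup F] [NormedSpace 𝕜 F] [NormedAddCommGroup G] [NormedSpace 𝕜 G]

lemma fderiv_apply_one_eq_deriv_add_smul_deriv {H : 𝕜 × 𝕜 → G} {p : 𝕜 × 𝕜}
    (hH : DifferentiableAt 𝕜 H p) (a : 𝕜) :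
    fderiv 𝕜 H p (1, a) =
      deriv (fun s => H (s, p.2)) p.1 + a • deriv (fun ζ => H (p.1, ζ)) p.2 := by
  have h₁ : HasDerivAt (fun s => H (s, p.2)) (fderiv 𝕜 H p (1, 0)) p.1 :=
    hH.hasFDerivAt.comp_hasDerivAt p.1 ((hasDerivAt_id _).prodMk (hasDerivAt_const _ _))
  have h₂ : HasDerivAt (fun ζ => H (p.1, ζ)) (fderiv 𝕜 H p (0, 1)) p.2 :=
    hH.hasFDerivAt.comp_hasDerivAt p.2 ((hasDerivAt_const _ _).prodMk (hasDerivAt_id _))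
  rw [h₁.deriv, h₂.deriv, ← map_smul, ← map_add]
  simp

lemma ContinuousLinearMap.apply_prodMk_zero_eq_sum {ι : Type*} [Fintype ι] [DecidableEq ι]
    (L : (ι → 𝕜) × F →L[𝕜] G) (w : ι → 𝕜) :
    L (w, 0) = ∑ i, w i • L (Pi.single i 1, 0) := by
  change L.comp (inl 𝕜 _ F) w = _
  conv_lhs => rw [pi_eq_sum_univ' w]
  simp

lemma deriv_comp_one_add_smul {Ψ : E × F → G} {w : E} {ζ : F}
    (hΨ : DifferentiableAt 𝕜 Ψ (w, ζ)) :
    deriv (fun s : 𝕜 => Ψ ((1 + s) • w, ζ)) 0 = fderiv 𝕜 Ψ (w, ζ) (w, 0) := by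
  have hcurve : HasDerivAt (fun s : 𝕜 => ((1 + s) • w, ζ)) (w, 0) 0 := by
    simpa using
      (((hasDerivAt_id (0 : 𝕜)).const_add 1).smul_const w).prodMk (hasDerivAt_const _ ζ)
  have hΨ' : HasFDerivAt Ψ (fderiv 𝕜 Ψ (w, ζ)) ((1 + (0 : 𝕜)) • w, ζ) := by
    simpa using hΨ.hasFDerivAt
  exact (hΨ'.comp_hasDerivAt 0 hcurve).deriv

lemma DifferentiableAt.hasDerivAt_comp_one_add_smul {f : E → F} {x : E}
    [NormedSpace ℝ E] [NormedSpace ℝ F] (hf : DifferentiableAt ℝ f x) :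
    HasDerivAt (fun t : ℝ => f ((1 + t) • x)) (fderiv ℝ f x x) 0 := by
  have hf' : HasFDerivAt f (fderiv ℝ f x) ((1 + (0 : ℝ)) • x) := by
    simpa using hf.hasFDerivAt
  have hray : HasDerivAt (fun t : ℝ => (1 + t) • x) x 0 := by
    simpa using ((hasDerivAt_id (0 : ℝ)).const_add 1).smul_const x
  exact hf'.comp_hasDerivAt 0 hray

end Calculus

section RadialDerivative

variable {n : Type*} [Fintype n] {M : ℂ → Matrix n n ℂ} {Ψ : (n → ℂ) × ℂ → ℂ}
  {U : Set (n → ℂ)} {z : (n → ℂ) → ℂ} {q : n → ℂ}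

lemma differentiable_smul_sub_mulVec_star (hM : ∀ i j, Differentiable ℂ fun ζ => M ζ i j)
    (q : n → ℂ) :
    Differentiable ℂ fun p : ℂ × ℂ => ((1 + p.1) • (q - M p.2 *ᵥ star q), p.2) := by
  refine .prodMk (.fun_smul (by fun_prop) ?_) differentiable_snd
  refine differentiable_pi.2 fun i => ?_
  simp only [Pi.sub_apply, mulVec, dotProduct]
  exact (differentiable_const _).sub <| .fun_sum fun j _ =>
    ((hM i j).comp differentiable_snd).mul (differentiable_const _)

theorem sum_mul_fderiv_add_fderiv_mul_deriv_eq_zero [DecidableEq n]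
    (hM : ∀ i j, Differentiable ℂ fun ζ => M ζ i j) (hΨ : Differentiable ℂ Ψ) (hU : IsOpen U)
    (hz : DifferentiableOn ℝ z U)
    (hsol : ∀ q ∈ U, Ψ (q - M (z q) *ᵥ star q, z q) = 0) (hq : q ∈ U) :
    ∑ i, (q - M (z q) *ᵥ star q) i *
        fderiv ℂ Ψ (q - M (z q) *ᵥ star q, z q) (Pi.single i 1, 0)
      + fderiv ℝ z q q * deriv (fun ζ => Ψ (q - M ζ *ᵥ star q, ζ)) (z q) = 0 := by
  set H : ℂ × ℂ → ℂ := fun p => Ψ ((1 + p.1) • (q - M p.2 *ᵥ star q), p.2)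
  have hH : Differentiable ℂ H := hΨ.comp (differentiable_smul_sub_mulVec_star hM q)
  have hzero : ∀ᶠ t : ℝ in 𝓝 0, H (t, z ((1 + t) • q)) = 0 := by
    have hray : ∀ᶠ t : ℝ in 𝓝 0, (1 + t) • q ∈ U :=
      (continuous_const.add continuous_id).smul continuous_const |>.continuousAt.eventually_mem
        (hU.mem_nhds (by simpa using hq))
    filter_upwards [hray] with t ht
    simpa only [H, ← Complex.ofReal_one, ← Complex.ofReal_add, ofReal_smul_sub_mulVec_star]
      using hsol _ ht
  have hγ : HasDerivAt (fun t : ℝ => ((t : ℂ), z ((1 + t) • q))) (1, fderiv ℝ z q q) 0 :=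
    Complex.ofRealCLM.hasDerivAt.prodMk
      ((hz q hq).differentiableAt (hU.mem_nhds hq)).hasDerivAt_comp_one_add_smul
  have h := ((hH _).hasFDerivAt.restrictScalars ℝ).apply_eq_zero_of_eventually_comp_eq_zero
    hγ hzero
  have hγ0 : (((0 : ℝ) : ℂ), z ((1 + (0 : ℝ)) • q)) = (0, z q) := by simp
  rw [hγ0, ContinuousLinearMap.coe_restrictScalars',
    fderiv_apply_one_eq_deriv_add_smul_deriv (hH _)] at h
  have hs : deriv (fun s => H (s, z q)) 0 = ∑ i, (q - M (z q) *ᵥ star q) i *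
      fderiv ℂ Ψ (q - M (z q) *ᵥ star q, z q) (Pi.single i 1, 0) := by
    simp only [H]
    rw [deriv_comp_one_add_smul (hΨ _), ContinuousLinearMap.apply_prodMk_zero_eq_sum]
    simp only [smul_eq_mul]
  have hζ : deriv (fun ζ => H (0, ζ)) (z q) =
      deriv (fun ζ => Ψ (q - M ζ *ᵥ star q, ζ)) (z q) := by
    simp [H]
  rwa [hs, hζ] at h

end RadialDerivative

theorem radial_invariance_iff_conditionH_general
    (m : ℕ)
    (M : ℂ → Matrix (Fin m) (Fin m) ℂ)
    (hM : ∀ i j, Differentiable ℂ (fun ζ => M ζ i j))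
    (Ψ : ((Fin m → ℂ) × ℂ) → ℂ) (hΨ : Differentiable ℂ Ψ)
    (U : Set (Fin m → ℂ)) (hU : IsOpen U)
    (z : (Fin m → ℂ) → ℂ) (hz : DifferentiableOn ℝ z U)
    (hsol : ∀ q ∈ U, Ψ (q - (M (z q)).mulVec (star q), z q) = 0)
    (hreg : ∀ q ∈ U,
      deriv (fun ζ => Ψ (q - (M ζ).mulVec (star q), ζ)) (z q) ≠ 0) :
    ((∀ q ∈ U, fderiv ℝ z q q = 0) ↔
      (∀ q ∈ U,
        ∑ i, (q - (M (z q)).mulVec (star q)) i *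
          fderiv ℂ Ψ (q - (M (z q)).mulVec (star q), z q) (Pi.single i 1, 0) = 0)) ∧
    ((∀ (w : Fin m → ℂ) (ζ : ℂ), Ψ (w, ζ) = 0 →
        ∑ i, w i * fderiv ℂ Ψ (w, ζ) (Pi.single i 1, 0) = 0) →
      ∀ q ∈ U, fderiv ℝ z q q = 0) := by
  have radial_iff : (∀ q ∈ U, fderiv ℝ z q q = 0) ↔ (∀ q ∈ U,
      ∑ i, (q - M (z q) *ᵥ star q) i *
        fderiv ℂ Ψ (q - M (z q) *ᵥ star q, z q) (Pi.single i 1, 0) = 0) := by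
    refine forall₂_congr fun q hq => ?_
    have key := sum_mul_fderiv_add_fderiv_mul_deriv_eq_zero hM hΨ hU hz hsol hq
    rw [eq_neg_of_add_eq_zero_left key, neg_eq_zero, mul_eq_zero, or_iff_left (hreg q hq)]
  exact ⟨radial_iff, fun hH => radial_iff.2 fun q hq => hH _ _ (hsol q hq)⟩

/-- Theorem 4.2 of the paper. For a real-differentiable solution `z`
of `Ψ̃(q, z(q)) = 0` with everywhere-nonvanishing `ζ`-derivative, `z` is invariant
under radial projection (`(fderiv ℝ z q)(q) = 0` on `U`) iff
`Σᵢ wⁱ·∂Ψ/∂wⁱ` vanishes at `(w(q, z(q)), z(q))` for all `q ∈ U`. In particular,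
if `Ψ` satisfies Condition (H) — `Σᵢ wᵢ·(∂Ψ/∂wⁱ)(w, ζ) = 0` whenever `Ψ(w, ζ) = 0`
— then `(fderiv ℝ z q)(q) = 0` throughout `U`. -/
theorem radial_invariance_iff_conditionH
    (m : ℕ) (hm : 2 ≤ m)
    (M : ℂ → Matrix (Fin m) (Fin m) ℂ)
    (hM : ∀ i j, Differentiable ℂ (fun ζ => M ζ i j))
    (hManti : ∀ ζ, (M ζ)ᵀ = -(M ζ))
    (Ψ : ((Fin m → ℂ) × ℂ) → ℂ) (hΨ : Differentiable ℂ Ψ)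
    (U : Set (Fin m → ℂ)) (hU : IsOpen U)
    (z : (Fin m → ℂ) → ℂ) (hz : DifferentiableOn ℝ z U)
    (hsol : ∀ q ∈ U, Ψ (q - (M (z q)).mulVec (star q), z q) = 0)
    (hreg : ∀ q ∈ U,
      deriv (fun ζ => Ψ (q - (M ζ).mulVec (star q), ζ)) (z q) ≠ 0) :
    ((∀ q ∈ U, fderiv ℝ z q q = 0) ↔
      (∀ q ∈ U,
        ∑ i, (q - (M (z q)).mulVec (star q)) i *
          fderiv ℂ Ψ (q - (M (z q)).mulVec (star q), z q) (Pi.single i 1, 0) = 0)) ∧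
    ((∀ (w : Fin m → ℂ) (ζ : ℂ), Ψ (w, ζ) = 0 →
        ∑ i, w i * fderiv ℂ Ψ (w, ζ) (Pi.single i 1, 0) = 0) →
      ∀ q ∈ U, fderiv ℝ z q q = 0) :=
  radial_invariance_iff_conditionH_general m M hM Ψ hΨ U hU z hz hsol hreg
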